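/- Fix a constant 0 < a < 1 and set β_h = 1/2 + 1/h^a for each positive integer h. Then there exist positive constants c₂ and c₃ such that f_a(n) ≤ c₂·n^{2a/(1+a)} + c₃ for all positive integers n, where f_a(n) is the smallest number f such that every binary sequence of length n can be turned into a square-free sequence by f deduplication steps, each of which replaces a substring v·v′ consisting of two consecutive blocks of some common length h at Hamming distance at most β_h·h by v or by v′. -/
import Mathlib


/-- A binary sequence is square-free if it contains no nonempty factor of the form `b ++ b`. -/
def SqFree (s : List Bool) : Prop :=
  ¬ ∃ a b c : List Bool, b ≠ [] ∧ s = a ++ (b ++ b) ++ c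

/-- Hamming distance between two binary lists (of the same length). -/
def hdist (x y : List Bool) : ℕ := (List.zip x y).countP (fun p => p.1 != p.2)

/-- A `β_h`-deduplication with `β_h = 1/2 + h^{-a}`: replace a substring `v ++ v'` of two
adjacent blocks of common length `h` at Hamming distance at most `β_h·h` by `v` or `v'`. -/
def AFDedup (a : ℝ) (x y : List Bool) : Prop :=
  ∃ u v v' w : List Bool, v ≠ [] ∧ v.length = v'.length ∧
    (hdist v v' : ℝ) ≤ (1 / 2 + 1 / ((v.length : ℝ) ^ a)) * v.length ∧
    x = u ++ (v ++ v') ++ w ∧ (y = u ++ v ++ w ∨ y = u ++ v' ++ w)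

/-- `AFDedupSteps a k x y` : `y` is obtained from `x` by exactly `k` such deduplications. -/
def AFDedupSteps (a : ℝ) : ℕ → List Bool → List Bool → Prop
  | 0 => fun x y => x = y
  | k + 1 => fun x y => ∃ z, AFDedup a x z ∧ AFDedupSteps a k z y

/-- `famax a n` : the smallest `f` such that every binary sequence of length `n` can be turned
into a square-free sequence by at most `f` such deduplication steps. -/
noncomputable def famax (a : ℝ) (n : ℕ) : ℕ :=
  sInf {k | ∀ s : List Bool, s.length = n →
    ∃ j ≤ k, ∃ r : List Bool, SqFree r ∧ AFDedupSteps a j s r}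


open Finset

lemma sqfree_short (s : List Bool) (h : s.length ≤ 1) : SqFree s := by
  rintro ⟨a, b, c, hb, rfl⟩
  have : 1 ≤ b.length := List.length_pos_iff.2 hb
  simp [List.length_append] at h
  omega

lemma dedup_unit (a : ℝ) (b b' : Bool) (t : List Bool) :
    AFDedup a (b :: b' :: t) (b :: t) := by
  refine ⟨[], [b], [b'], t, by simp, by simp, ?_, by simp, Or.inl (by simp)⟩
  have h1 : hdist [b] [b'] ≤ 1 := by
    have := List.countP_le_length (l := List.zip [b] [b']) (p := fun p => p.1 != p.2)
    simpa [hdist] using this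
  have : ((hdist [b] [b'] : ℕ) : ℝ) ≤ 1 := by exact_mod_cast h1
  simp only [List.length_cons, List.length_nil]
  push_cast
  rw [Real.one_rpow]
  linarith

lemma reduce_short (a : ℝ) : ∀ (n : ℕ) (s : List Bool), s.length = n + 1 →
    ∃ r : List Bool, SqFree r ∧ AFDedupSteps a n s r := by
  intro n
  induction n with
  | zero =>
    intro s hs
    exact ⟨s, sqfree_short s (by omega), rfl⟩
  | succ k ih =>
    intro s hs
    match s with
    | b :: b' :: t =>
      simp only [List.length_cons] at hs
      obtain ⟨r, hr, hsteps⟩ := ih (b :: t) (by simp; omega)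
      exact ⟨r, hr, ⟨b :: t, dedup_unit a b b' t, hsteps⟩⟩

lemma sq_expand' (g : ℕ → ℝ) (W : ℕ) :
    (∑ j ∈ range W, g j) ^ 2
      = ∑ j ∈ range W, (g j) ^ 2 + 2 * ∑ j ∈ range W, ∑ i ∈ range j, g i * g j := by
  induction W with
  | zero => simp
  | succ n ih =>
    rw [Finset.sum_range_succ, add_sq, ih, Finset.sum_range_succ (fun j => (g j)^2),
      Finset.sum_range_succ (fun j => ∑ i ∈ range j, g i * g j), Finset.mul_sum]
    rw [show ∑ x ∈ range n, 2 * ∑ i ∈ range x, g i * g x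
        = 2 * ∑ x ∈ range n, ∑ i ∈ range x, g i * g x from (Finset.mul_sum _ _ _).symm,
      ← Finset.sum_mul]
    ring

lemma pair_reindex (g : ℕ → ℝ) (W : ℕ) :
    ∑ j ∈ range W, ∑ i ∈ range j, g i * g j
      = ∑ d ∈ Finset.Ico 1 W, ∑ j ∈ range (W - d), g j * g (j + d) := by
  rw [Finset.sum_sigma', Finset.sum_sigma']
  refine Finset.sum_nbij' (fun p => ⟨p.1 - p.2, p.2⟩) (fun p => ⟨p.2 + p.1, p.2⟩) ?_ ?_ ?_ ?_ ?_
  · rintro ⟨j, i⟩ h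
    simp only [Finset.mem_sigma, Finset.mem_range, Finset.mem_Ico] at h ⊢
    omega
  · rintro ⟨d, j⟩ h
    simp only [Finset.mem_sigma, Finset.mem_range, Finset.mem_Ico] at h ⊢
    omega
  · rintro ⟨j, i⟩ h
    simp only [Finset.mem_sigma, Finset.mem_range] at h
    ext <;> simp <;> omega
  · rintro ⟨d, j⟩ h
    simp only [Finset.mem_sigma, Finset.mem_range, Finset.mem_Ico] at h
    ext <;> simp <;> omega
  · rintro ⟨j, i⟩ h
    simp only [Finset.mem_sigma, Finset.mem_range] at h
    have : i + (j - i) = j := by omega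
    simp [this]

lemma sum_blocks (g : ℕ → ℝ) (K d : ℕ) :
    ∑ q ∈ range (K*d), g q = ∑ k ∈ range K, ∑ j ∈ range d, g (k*d + j) := by
  induction K with
  | zero => simp
  | succ n ih =>
    rw [Finset.sum_range_succ, ← ih, show (n+1)*d = n*d + d by ring, Finset.sum_range_add]

lemma gauss (n : ℕ) : ∑ i ∈ range n, ((n - i : ℕ) : ℝ) = n*(n+1)/2 := by
  induction n with
  | zero => simp
  | succ k ih =>
    rw [Finset.sum_range_succ]
    have h1 : ∀ i ∈ range k, ((k + 1 - i : ℕ) : ℝ) = ((k - i : ℕ) : ℝ) + 1 := by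
      intro i hi
      simp only [Finset.mem_range] at hi
      have : k + 1 - i = (k - i) + 1 := by omega
      rw [this]; push_cast; ring
    rw [Finset.sum_congr rfl h1, Finset.sum_add_distrib, ih]
    simp only [Finset.sum_const, Finset.card_range, nsmul_eq_mul, mul_one]
    have : k + 1 - k = 1 := by omega
    rw [this]; push_cast; ring

set_option maxHeartbeats 1000000 in
lemma core (a : ℝ) (ha0 : 0 < a) (m W H : ℕ) (x : ℕ → ℝ)
    (hx : ∀ q, x q = 1 ∨ x q = -1)
    (hW3 : 3 ≤ W)
    (hW32 : 32 * (W:ℝ)^a ≤ (W:ℝ))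
    (hH1 : 1 ≤ H)
    (hH2 : (H:ℝ) ≤ (W:ℝ) * ((W:ℝ)^a)⁻¹ / 16 + 1)
    (hm : 48*(W:ℝ)*(W:ℝ)^a < (m:ℝ))
    (hcon : ∀ d p, H ≤ d → d < W → p + 2*d ≤ m →
      (∑ j ∈ range d, x (p+j) * x (p+j+d)) < -2*(d:ℝ)*(((d:ℝ)^a)⁻¹)) : False := by
  set Wa : ℝ := (W:ℝ)^a with hWadef
  have hWpos : (0:ℝ) < W := by positivity
  have hWapos : (0:ℝ) < Wa := Real.rpow_pos_of_pos hWpos a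
  have hWa1 : (1:ℝ) ≤ Wa := Real.one_le_rpow (by exact_mod_cast hW3.trans' (by norm_num : (1:ℕ) ≤ 3)) ha0.le
  have hWane : Wa ≠ 0 := ne_of_gt hWapos
  have hmpos : (0:ℝ) < m := lt_trans (by positivity) hm
  have hmW : W ≤ m := by
    have : (W:ℝ) < m := by nlinarith
    exact_mod_cast this.le
  set M : ℕ := m - W + 1 with hMdef
  have hW3' : (3:ℝ) ≤ W := by exact_mod_cast hW3
  have hMcast : (M:ℝ) = (m:ℝ) - W + 1 := by
    rw [hMdef, Nat.cast_add, Nat.cast_sub hmW, Nat.cast_one]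
  have hMm : (M:ℝ) ≤ m := by rw [hMcast]; linarith
  have hHW2 : (H:ℝ) ≤ (W:ℝ)/2 := by
    have h1 : (W:ℝ) * Wa⁻¹ ≤ W := by
      have : Wa⁻¹ ≤ 1 := inv_le_one_of_one_le₀ hWa1
      nlinarith
    have h16 : (16:ℝ)/7 ≤ W := by
      have : (3:ℝ) ≤ W := by exact_mod_cast hW3
      linarith
    have : (H:ℝ) ≤ (W:ℝ)/16 + 1 := by
      calc (H:ℝ) ≤ (W:ℝ) * Wa⁻¹ / 16 + 1 := hH2
        _ ≤ (W:ℝ)/16 + 1 := by linarith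
    linarith
  have hHWnat : H < W := by
    have hW3' : (3:ℝ) ≤ W := by exact_mod_cast hW3
    have : (H:ℝ) < W := by linarith
    exact_mod_cast this
  -- the correlation function
  set y : ℕ → ℕ → ℝ := fun d q => x q * x (q+d) with hydef
  have hy1 : ∀ d q, y d q ≤ 1 := by
    intro d q
    rcases hx q with h1 | h1 <;> rcases hx (q+d) with h2 | h2 <;> simp [hydef, h1, h2]
  have hy2 : ∀ d q, -1 ≤ y d q := by
    intro d q
    rcases hx q with h1 | h1 <;> rcases hx (q+d) with h2 | h2 <;> simp [hydef, h1, h2]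
  -- global correlation sums
  set D : ℕ → ℝ := fun d => ∑ q ∈ range (m - d), y d q with hDdef
  have Dbound : ∀ d, H ≤ d → d < W → D d ≤ -2*(m:ℝ)*Wa⁻¹ + 5*W := by
    intro d hHd hdW
    have hd1 : 1 ≤ d := hH1.trans hHd
    have hdpos : (0:ℝ) < d := by exact_mod_cast hd1
    have hdm : d ≤ m := le_trans (le_of_lt hdW) hmW
    set Da : ℝ := (d:ℝ)^a with hDadef
    have hDapos : (0:ℝ) < Da := Real.rpow_pos_of_pos hdpos a
    have hDa1 : (1:ℝ) ≤ Da := Real.one_le_rpow (by exact_mod_cast hd1) ha0.le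
    have hDaW : Da ≤ Wa := by
      apply Real.rpow_le_rpow (by positivity) _ ha0.le
      exact_mod_cast hdW.le
    set K : ℕ := (m - d)/d with hKdef
    set r : ℕ := (m - d) % d with hrdef
    have hKdr : K * d + r = m - d := by rw [hKdef, hrdef, mul_comm]; exact Nat.div_add_mod _ _
    have hKd_le : K * d ≤ m - d := Nat.div_mul_le_self _ _
    have hsplit : D d = ∑ q ∈ range (K*d), y d q + ∑ q ∈ Finset.Ico (K*d) (m-d), y d q := by
      simp only [hDdef]
      exact (Finset.sum_range_add_sum_Ico _ hKd_le).symm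
    have hblocks : ∑ q ∈ range (K*d), y d q ≤ (K:ℝ) * (-2*(d:ℝ)*Da⁻¹) := by
      rw [sum_blocks]
      have hle : ∀ k ∈ range K, ∑ j ∈ range d, y d (k*d+j) ≤ -2*(d:ℝ)*Da⁻¹ := by
        intro k hk
        simp only [Finset.mem_range] at hk
        have hp : k*d + 2*d ≤ m := by
          have h1 : (k+1)*d ≤ K*d := Nat.mul_le_mul_right d (by omega)
          have h2 : (k+1)*d = k*d + d := by ring
          omega
        have := hcon d (k*d) hHd hdW hp
        apply le_of_lt
        calc ∑ j ∈ range d, y d (k*d+j)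
            = ∑ j ∈ range d, x (k*d+j) * x (k*d+j+d) := by
              apply Finset.sum_congr rfl
              intro j _
              simp only [hydef]
          _ < -2*(d:ℝ)*Da⁻¹ := this
      calc ∑ k ∈ range K, ∑ j ∈ range d, y d (k*d+j)
          ≤ ∑ _k ∈ range K, (-2*(d:ℝ)*Da⁻¹) := Finset.sum_le_sum hle
        _ = (K:ℝ) * (-2*(d:ℝ)*Da⁻¹) := by
            rw [Finset.sum_const, Finset.card_range, nsmul_eq_mul]
    have hrem : ∑ q ∈ Finset.Ico (K*d) (m-d), y d q ≤ (((m - d) - K*d : ℕ) : ℝ) := by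
      have h := Finset.sum_le_card_nsmul (Finset.Ico (K*d) (m-d)) (y d) 1 (fun q _ => hy1 d q)
      simpa [Nat.card_Ico, nsmul_eq_mul] using h
    have hr_lt : r < d := Nat.mod_lt _ (by omega)
    have hrm : (((m - d) - K*d : ℕ) : ℝ) ≤ (d:ℝ) := by
      have h1 : (m - d) - K*d ≤ d := by omega
      exact_mod_cast h1
    have hKdR : (m:ℝ) - 2*d ≤ (K:ℝ)*d := by
      have h1 : K*d + r + d = m := by omega
      have h2 : ((K*d + r + d : ℕ):ℝ) = (m:ℝ) := by rw [h1]
      push_cast at h2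
      have h3 : (r:ℝ) < d := by exact_mod_cast hr_lt
      nlinarith
    have hiDa : (0:ℝ) < Da⁻¹ := inv_pos.2 hDapos
    have hiDa1 : Da⁻¹ ≤ 1 := inv_le_one_of_one_le₀ hDa1
    have hiWleD : Wa⁻¹ ≤ Da⁻¹ := by
      rw [← one_div, ← one_div]
      exact one_div_le_one_div_of_le hDapos hDaW
    have hb2 : (K:ℝ) * (-2*(d:ℝ)*Da⁻¹) ≤ -2*(m:ℝ)*Da⁻¹ + 4*(d:ℝ)*Da⁻¹ := by
      nlinarith [mul_le_mul_of_nonneg_left hKdR hiDa.le]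
    have hb3 : -2*(m:ℝ)*Da⁻¹ ≤ -2*(m:ℝ)*Wa⁻¹ := by
      nlinarith [mul_le_mul_of_nonneg_left hiWleD hmpos.le]
    have hb4 : 4*(d:ℝ)*Da⁻¹ ≤ 4*(d:ℝ) := by
      nlinarith [mul_le_mul_of_nonneg_left hiDa1 (by positivity : (0:ℝ) ≤ 4*(d:ℝ))]
    have hdled : (d:ℝ) ≤ W := by exact_mod_cast hdW.le
    rw [hsplit]
    linarith
  -- window sums
  set U : ℕ → ℝ := fun d => ∑ p ∈ range M, ∑ j ∈ range (W - d), y d (p+j) with hUdef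
  have Ubound : ∀ d, H ≤ d → d < W → U d ≤ ((W - d : ℕ):ℝ) * (D d + W) := by
    intro d hHd hdW
    have hswap : U d = ∑ j ∈ range (W - d), ∑ p ∈ range M, y d (p+j) := by
      simp only [hUdef]
      exact Finset.sum_comm
    have hinner : ∀ j, j < W - d → ∑ p ∈ range M, y d (p+j) ≤ D d + W := by
      intro j hj
      have hsub : Finset.Ico j (j+M) ⊆ range (m - d) := by
        intro q hq
        simp only [Finset.mem_Ico] at hq
        simp only [Finset.mem_range]
        omega
      have hIco : ∑ q ∈ Finset.Ico j (j+M), y d q = ∑ p ∈ range M, y d (p+j) := by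
        rw [Finset.sum_Ico_eq_sum_range]
        simp only [Nat.add_sub_cancel_left]
        apply Finset.sum_congr rfl
        intro p _
        rw [Nat.add_comm j p]
      have hsd := Finset.sum_sdiff (f := y d) hsub
      have hlow : -(((m - d) - M : ℕ):ℝ) ≤ ∑ q ∈ range (m-d) \ Finset.Ico j (j+M), y d q := by
        have h := Finset.card_nsmul_le_sum (range (m-d) \ Finset.Ico j (j+M)) (y d) (-1)
          (fun q _ => hy2 d q)
        have hcard : (range (m-d) \ Finset.Ico j (j+M)).card = (m - d) - M := by
          rw [Finset.card_sdiff_of_subset hsub, Finset.card_range, Nat.card_Ico]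
          omega
        rw [hcard] at h
        simpa [nsmul_eq_mul] using h
      have hWd : (((m - d) - M : ℕ):ℝ) ≤ (W:ℝ) := by
        have h1 : (m - d) - M ≤ W := by omega
        exact_mod_cast h1
      have : ∑ q ∈ Finset.Ico j (j+M), y d q ≤ D d + W := by
        have hD : D d = ∑ q ∈ range (m-d), y d q := by simp only [hDdef]
        nlinarith [hsd, hlow, hWd]
      linarith [hIco ▸ this]
    rw [hswap]
    calc ∑ j ∈ range (W - d), ∑ p ∈ range M, y d (p+j)
        ≤ ∑ _j ∈ range (W - d), (D d + W) :=
          Finset.sum_le_sum (fun j hj => hinner j (Finset.mem_range.1 hj))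
      _ = ((W - d : ℕ):ℝ) * (D d + W) := by
          rw [Finset.sum_const, Finset.card_range, nsmul_eq_mul]
  have trivU : ∀ d, U d ≤ (M:ℝ) * W := by
    intro d
    have h1 : ∀ p ∈ range M, ∑ j ∈ range (W - d), y d (p+j) ≤ (W:ℝ) := by
      intro p _
      have h := Finset.sum_le_card_nsmul (range (W-d)) (fun j => y d (p+j)) 1
        (fun j _ => hy1 d (p+j))
      have h2 : ((W - d : ℕ):ℝ) ≤ (W:ℝ) := by
        have : W - d ≤ W := by omega
        exact_mod_cast this
      simp only [Finset.card_range, nsmul_eq_mul, mul_one] at h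
      linarith
    calc U d ≤ ∑ _p ∈ range M, (W:ℝ) := Finset.sum_le_sum h1
      _ = (M:ℝ) * W := by rw [Finset.sum_const, Finset.card_range, nsmul_eq_mul]
  -- expansion of the window square sums
  have hsq1 : ∀ q, (x q)^2 = 1 := by
    intro q; rcases hx q with h | h <;> rw [h] <;> norm_num
  have hexp : ∀ p : ℕ, (∑ j ∈ range W, x (p+j))^2
      = (W:ℝ) + 2 * ∑ d ∈ Finset.Ico 1 W, ∑ j ∈ range (W - d), y d (p+j) := by
    intro p
    have h := sq_expand' (fun j => x (p+j)) W
    rw [pair_reindex] at h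
    have h1 : ∑ j ∈ range W, (x (p+j))^2 = (W:ℝ) := by
      rw [Finset.sum_congr rfl (fun j _ => hsq1 (p+j)), Finset.sum_const, Finset.card_range,
        nsmul_eq_mul, mul_one]
    have h2 : ∀ d ∈ Finset.Ico 1 W, ∑ j ∈ range (W - d), x (p+j) * x (p+(j+d))
        = ∑ j ∈ range (W - d), y d (p+j) := by
      intro d _
      apply Finset.sum_congr rfl
      intro j _
      simp only [hydef]
      have e1 : p+(j+d) = (p+j)+d := by omega
      rw [e1]
    rw [h1, Finset.sum_congr rfl h2] at h
    exact h
  -- assemble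
  have hS : (0:ℝ) ≤ ∑ p ∈ range M, (∑ j ∈ range W, x (p+j))^2 :=
    Finset.sum_nonneg fun _ _ => sq_nonneg _
  have hS2 : ∑ p ∈ range M, (∑ j ∈ range W, x (p+j))^2
      = (M:ℝ)*W + 2 * ∑ d ∈ Finset.Ico 1 W, U d := by
    rw [Finset.sum_congr rfl (fun p _ => hexp p), Finset.sum_add_distrib, Finset.sum_const,
      Finset.card_range, nsmul_eq_mul, ← Finset.mul_sum]
    congr 1
    rw [Finset.sum_comm]
  have hsplitIco : ∑ d ∈ Finset.Ico 1 W, U d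
      = ∑ d ∈ Finset.Ico 1 H, U d + ∑ d ∈ Finset.Ico H W, U d :=
    (Finset.sum_Ico_consecutive _ hH1 (le_of_lt hHWnat)).symm
  have hpart1 : ∑ d ∈ Finset.Ico 1 H, U d ≤ ((H-1:ℕ):ℝ) * ((M:ℝ)*W) := by
    calc ∑ d ∈ Finset.Ico 1 H, U d ≤ ∑ _d ∈ Finset.Ico 1 H, (M:ℝ)*W :=
          Finset.sum_le_sum (fun d _ => trivU d)
      _ = ((H-1:ℕ):ℝ) * ((M:ℝ)*W) := by rw [Finset.sum_const, Nat.card_Ico, nsmul_eq_mul]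
  set Cstar : ℝ := -2*(m:ℝ)*Wa⁻¹ + 6*(W:ℝ) with hCstardef
  have hpart2 : ∑ d ∈ Finset.Ico H W, U d ≤ (∑ d ∈ Finset.Ico H W, ((W-d:ℕ):ℝ)) * Cstar := by
    rw [Finset.sum_mul]
    apply Finset.sum_le_sum
    intro d hd
    simp only [Finset.mem_Ico] at hd
    calc U d ≤ ((W-d:ℕ):ℝ) * (D d + W) := Ubound d hd.1 hd.2
      _ ≤ ((W-d:ℕ):ℝ) * Cstar := by
          apply mul_le_mul_of_nonneg_left _ (by positivity)
          have hDb := Dbound d hd.1 hd.2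
          simp only [hCstardef]
          linarith
  have hQ : ∑ d ∈ Finset.Ico H W, ((W-d:ℕ):ℝ)
      = ((W-H:ℕ):ℝ) * (((W-H:ℕ):ℝ)+1)/2 := by
    rw [Finset.sum_Ico_eq_sum_range]
    have hc : ∀ k ∈ range (W - H), ((W - (H+k):ℕ):ℝ) = (((W-H) - k : ℕ):ℝ) := by
      intro k _
      congr 1
      omega
    rw [Finset.sum_congr rfl hc, gauss]
  have hQ8 : (W:ℝ)^2/8 ≤ ∑ d ∈ Finset.Ico H W, ((W-d:ℕ):ℝ) := by
    rw [hQ]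
    have hn : (W:ℝ)/2 ≤ ((W-H:ℕ):ℝ) := by
      rw [Nat.cast_sub (le_of_lt hHWnat)]
      linarith
    nlinarith [hn, hWpos]
  have hCneg : Cstar ≤ 0 := by
    have h1 : (2:ℝ)*(48*W*Wa)*Wa⁻¹ ≤ 2*m*Wa⁻¹ := by
      apply mul_le_mul_of_nonneg_right _ (inv_pos.2 hWapos).le
      linarith
    have h2 : (2:ℝ)*(48*W*Wa)*Wa⁻¹ = 96*W*(Wa*Wa⁻¹) := by ring
    have h3 : Wa*Wa⁻¹ = 1 := mul_inv_cancel₀ hWane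
    rw [h2, h3, mul_one] at h1
    simp only [hCstardef]
    linarith
  have hp2' : ∑ d ∈ Finset.Ico H W, U d ≤ ((W:ℝ)^2/8) * Cstar :=
    le_trans hpart2 (mul_le_mul_of_nonpos_right hQ8 hCneg)
  have hHm1 : ((H-1:ℕ):ℝ) = (H:ℝ) - 1 := by rw [Nat.cast_sub hH1, Nat.cast_one]
  have hHpos : (1:ℝ) ≤ H := by exact_mod_cast hH1
  have hMpos : (0:ℝ) ≤ M := Nat.cast_nonneg M
  have e1 : (0:ℝ) ≤ (2*(H:ℝ)-1)*((M:ℝ)*(W:ℝ)) + ((W:ℝ)^2/4)*Cstar := by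
    rw [hS2, hsplitIco] at hS
    rw [hHm1] at hpart1
    nlinarith [hS, hpart1, hp2']
  have e2 : (2*(H:ℝ)-1)*((M:ℝ)*W) ≤ 2*(H:ℝ)*((m:ℝ)*W) := by
    have hMWmW : (M:ℝ)*W ≤ (m:ℝ)*W := mul_le_mul_of_nonneg_right hMm hWpos.le
    nlinarith [mul_nonneg hMpos hWpos.le]
  have e3 : (0:ℝ) ≤ 2*(H:ℝ)*((m:ℝ)*W) + ((W:ℝ)^2/4)*Cstar := by linarith
  have e4 : (0:ℝ) ≤ (2*(H:ℝ)*((m:ℝ)*W) + ((W:ℝ)^2/4)*Cstar) * Wa := mul_nonneg e3 hWapos.le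
  have hCWa : Cstar * Wa = -2*(m:ℝ) + 6*(W:ℝ)*Wa := by
    simp only [hCstardef]
    have h3 : Wa⁻¹*Wa = 1 := inv_mul_cancel₀ hWane
    calc (-2*(m:ℝ)*Wa⁻¹ + 6*(W:ℝ)) * Wa = -2*(m:ℝ)*(Wa⁻¹*Wa) + 6*(W:ℝ)*Wa := by ring
      _ = -2*(m:ℝ) + 6*(W:ℝ)*Wa := by rw [h3]; ring
  have g1 : (0:ℝ) ≤ 2*(H:ℝ)*Wa*((m:ℝ)*W) + ((W:ℝ)^2/4)*(-2*(m:ℝ) + 6*(W:ℝ)*Wa) := by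
    have expand : (2*(H:ℝ)*((m:ℝ)*W) + ((W:ℝ)^2/4)*Cstar)*Wa
        = 2*(H:ℝ)*Wa*((m:ℝ)*W) + ((W:ℝ)^2/4)*(Cstar*Wa) := by ring
    rw [expand, hCWa] at e4
    exact e4
  have f3 : (H:ℝ)*Wa ≤ 3*(W:ℝ)/32 := by
    have h1 : (H:ℝ)*Wa ≤ ((W:ℝ)*Wa⁻¹/16 + 1)*Wa := mul_le_mul_of_nonneg_right hH2 hWapos.le
    have h3 : Wa⁻¹*Wa = 1 := inv_mul_cancel₀ hWane
    have h2 : ((W:ℝ)*Wa⁻¹/16 + 1)*Wa = (W:ℝ)/16*(Wa⁻¹*Wa) + Wa := by ring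
    rw [h2, h3, mul_one] at h1
    linarith
  have p1 := mul_le_mul_of_nonneg_right f3 (show (0:ℝ) ≤ 2*(m:ℝ)*W by positivity)
  have p2 := mul_lt_mul_of_pos_right hm (show (0:ℝ) < (W:ℝ)^2 by positivity)
  have q1 : (0:ℝ) < (W:ℝ)^3*Wa := by positivity
  nlinarith [g1, p1, p2, q1]


lemma hdist_cons (b b' : Bool) (v v' : List Bool) :
    hdist (b::v) (b'::v') = hdist v v' + (if b = b' then 0 else 1) := by
  simp only [hdist, List.zip_cons_cons, List.countP_cons]
  rcases b <;> rcases b' <;> simp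

lemma hdist_sum (v : List Bool) : ∀ v' : List Bool, v.length = v'.length →
    ((hdist v v' : ℕ):ℝ)
      = ∑ j ∈ range v.length, (if v.getD j false = v'.getD j false then (0:ℝ) else 1) := by
  induction v with
  | nil =>
    intro v' hlen
    have : v' = [] := List.eq_nil_of_length_eq_zero hlen.symm
    subst this
    simp [hdist]
  | cons b vt ih =>
    intro v' hlen
    match v' with
    | [] => simp at hlen
    | b' :: v't =>
      simp only [List.length_cons] at hlen
      have hlen' : vt.length = v't.length := by omega
      rw [hdist_cons]
      simp only [List.length_cons]
      rw [Finset.sum_range_succ']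
      simp only [List.getD_cons_succ, List.getD_cons_zero]
      rw [← ih v't hlen']
      push_cast
      rcases b <;> rcases b' <;> simp <;> ring

lemma getD_take_drop (s : List Bool) (p d j : ℕ) (hj : j < d) (h2 : p + j < s.length) :
    ((s.drop p).take d).getD j false = s.getD (p+j) false := by
  have h1 : j < ((s.drop p).take d).length := by
    simp only [List.length_take, List.length_drop]
    omega
  rw [List.getD_eq_getElem _ _ h1, List.getD_eq_getElem _ _ h2]
  simp only [List.getElem_take, List.getElem_drop]

set_option maxHeartbeats 1000000 in
lemma exists_dedup (a : ℝ) (ha0 : 0 < a) (ha1 : a < 1) :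
    ∃ (m₀ : ℕ) (c : ℝ), 0 < c ∧ ∀ s : List Bool, m₀ < s.length →
      ∃ t : List Bool, AFDedup a s t ∧ 1 ≤ t.length ∧ t.length < s.length ∧
        c * ((s.length:ℝ)) ^ ((1-a)/(1+a)) ≤ (s.length:ℝ) - (t.length:ℝ) := by
  have h1a : (0:ℝ) < 1 - a := by linarith
  have h1a' : (0:ℝ) < 1 + a := by linarith
  set W₁ : ℕ := 3 + ⌈(32:ℝ)^((1-a)⁻¹)⌉₊ with hW₁def
  set m₀ : ℕ := ⌈(49:ℝ)*(((W₁:ℕ):ℝ)+2)^(1+a)⌉₊ with hm₀def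
  refine ⟨m₀, 1/1568, by norm_num, ?_⟩
  intro s hms
  set m : ℕ := s.length with hmdef
  have hm0R : (m₀:ℝ) < m := by exact_mod_cast hms
  have hmR : (49:ℝ)*(((W₁:ℕ):ℝ)+2)^(1+a) ≤ m := le_trans (Nat.le_ceil _) hm0R.le
  have hW₁2pos : (0:ℝ) ≤ ((W₁:ℕ):ℝ)+2 := by positivity
  have hmpos : (0:ℝ) < m := by
    have : (0:ℝ) < (49:ℝ)*(((W₁:ℕ):ℝ)+2)^(1+a) := by positivity
    linarith
  set t0 : ℝ := ((m:ℝ)/49)^((1+a)⁻¹) with ht0def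
  have ht0nn : 0 ≤ t0 := Real.rpow_nonneg (by positivity) _
  have ht0ge : ((W₁:ℕ):ℝ)+2 ≤ t0 := by
    have h1 : (((W₁:ℕ):ℝ)+2)^(1+a) ≤ (m:ℝ)/49 := by linarith
    have h2 := Real.rpow_le_rpow (by positivity) h1 (by positivity : (0:ℝ) ≤ (1+a)⁻¹)
    rwa [Real.rpow_rpow_inv hW₁2pos (by positivity : (1+a) ≠ 0)] at h2
  set W : ℕ := ⌊t0⌋₊ with hWdef
  have hWge : W₁ + 2 ≤ W := by
    apply Nat.le_floor
    push_cast
    exact ht0ge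
  have hW3 : 3 ≤ W := by omega
  have hWposR : (0:ℝ) < W := by
    have : (3:ℝ) ≤ W := by exact_mod_cast hW3
    linarith
  have hW1aR : (32:ℝ)^((1-a)⁻¹) ≤ (W:ℝ) := by
    have h1 : (⌈(32:ℝ)^((1-a)⁻¹)⌉₊ : ℝ) ≤ (W:ℝ) := by
      have : ⌈(32:ℝ)^((1-a)⁻¹)⌉₊ ≤ W := by omega
      exact_mod_cast this
    exact le_trans (Nat.le_ceil _) h1
  have hW32' : (32:ℝ) ≤ (W:ℝ)^(1-a) := by
    have h2 := Real.rpow_le_rpow (by positivity) hW1aR h1a.le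
    rwa [Real.rpow_inv_rpow (by norm_num : (0:ℝ) ≤ 32) (ne_of_gt h1a)] at h2
  have hWane : ((W:ℝ)^a) ≠ 0 := ne_of_gt (Real.rpow_pos_of_pos hWposR a)
  have hW1a_eq : (W:ℝ)^(1-a) = (W:ℝ) * ((W:ℝ)^a)⁻¹ := by
    rw [Real.rpow_sub hWposR, Real.rpow_one, div_eq_mul_inv]
  have hW32 : 32 * (W:ℝ)^a ≤ (W:ℝ) := by
    rw [hW1a_eq] at hW32'
    have hWapos : (0:ℝ) < (W:ℝ)^a := Real.rpow_pos_of_pos hWposR a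
    have := mul_le_mul_of_nonneg_right hW32' hWapos.le
    rw [mul_assoc, inv_mul_cancel₀ hWane, mul_one] at this
    linarith
  set H : ℕ := ⌈(W:ℝ)^(1-a)/16⌉₊ with hHdef
  have hH1 : 1 ≤ H := by
    rw [hHdef]
    exact Nat.ceil_pos.mpr (by positivity)
  have hH2 : (H:ℝ) ≤ (W:ℝ) * ((W:ℝ)^a)⁻¹ / 16 + 1 := by
    rw [← hW1a_eq]
    have := Nat.ceil_lt_add_one (show (0:ℝ) ≤ (W:ℝ)^(1-a)/16 by positivity)
    rw [hHdef]
    linarith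
  -- m > 48 W^{1+a}
  have hWt0 : (W:ℝ) ≤ t0 := Nat.floor_le ht0nn
  have ht0pow : t0^(1+a) = (m:ℝ)/49 :=
    Real.rpow_inv_rpow (by positivity) (by positivity : (1+a) ≠ 0)
  have hW1pa : (W:ℝ)^(1+a) ≤ (m:ℝ)/49 := by
    rw [← ht0pow]
    exact Real.rpow_le_rpow hWposR.le hWt0 (by positivity)
  have hWaddexp : (W:ℝ)^(1+a) = (W:ℝ) * (W:ℝ)^a := by
    rw [Real.rpow_add hWposR, Real.rpow_one]
  have hm48 : 48*(W:ℝ)*(W:ℝ)^a < (m:ℝ) := by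
    have h1 : 48*((W:ℝ)*(W:ℝ)^a) ≤ 48*((m:ℝ)/49) := by
      rw [← hWaddexp]
      linarith
    have h2 : 48*((m:ℝ)/49) < m := by linarith
    linarith [h1, h2]
  -- the ±1 sequence
  set x : ℕ → ℝ := fun q => if s.getD q false = true then 1 else -1 with hxdef
  have hx : ∀ q, x q = 1 ∨ x q = -1 := by
    intro q
    simp only [hxdef]
    split
    · left; rfl
    · right; rfl
  -- apply the core lemma
  have hex : ∃ d p, H ≤ d ∧ d < W ∧ p + 2*d ≤ m ∧
      -2*(d:ℝ)*(((d:ℝ)^a)⁻¹) ≤ ∑ j ∈ range d, x (p+j) * x (p+j+d) := by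
    by_contra hno
    push_neg at hno
    exact core a ha0 m W H x hx hW3 hW32 hH1 hH2 hm48
      (fun d p h1 h2 h3 => hno d p h1 h2 h3)
  obtain ⟨d, p, hHd, hdW, hpm, hcorr⟩ := hex
  have hd1 : 1 ≤ d := le_trans hH1 hHd
  have hdm : d ≤ m := by omega
  -- build the lists
  set u : List Bool := s.take p with hudef
  set v : List Bool := (s.drop p).take d with hvdef
  set v' : List Bool := (s.drop (p+d)).take d with hv'def
  set w : List Bool := s.drop (p+2*d) with hwdef
  have hvlen : v.length = d := by
    rw [hvdef, List.length_take, List.length_drop]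
    omega
  have hv'len : v'.length = d := by
    rw [hv'def, List.length_take, List.length_drop]
    omega
  have hulen : u.length = p := by
    rw [hudef, List.length_take]
    omega
  have hwlen : w.length = m - (p + 2*d) := by
    rw [hwdef, List.length_drop]
  have hsplit : s = u ++ (v ++ v') ++ w := by
    have e1 : s = s.take p ++ s.drop p := (List.take_append_drop p s).symm
    have e2 : s.drop p = v ++ (s.drop p).drop d := (List.take_append_drop d (s.drop p)).symm
    have e3 : (s.drop p).drop d = s.drop (p+d) := by
      rw [List.drop_drop]
    have e4 : s.drop (p+d) = v' ++ (s.drop (p+d)).drop d :=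
      (List.take_append_drop d (s.drop (p+d))).symm
    have e5 : (s.drop (p+d)).drop d = s.drop (p+2*d) := by
      rw [List.drop_drop]
      congr 1
      omega
    calc s = s.take p ++ s.drop p := e1
      _ = u ++ (v ++ (v' ++ w)) := by
          rw [e2, e3, e4, e5]
      _ = u ++ (v ++ v') ++ w := by
          simp [List.append_assoc]
  -- entries of v and v'
  have hv_get : ∀ j, j < d → v.getD j false = s.getD (p+j) false := by
    intro j hj
    rw [hvdef]
    exact getD_take_drop s p d j hj (by omega)
  have hv'_get : ∀ j, j < d → v'.getD j false = s.getD (p+j+d) false := by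
    intro j hj
    rw [hv'def, getD_take_drop s (p+d) d j hj (by omega)]
    congr 1
    omega
  -- correlation = d - 2 hdist
  have hcorr_eq : ∑ j ∈ range d, x (p+j) * x (p+j+d) = (d:ℝ) - 2*((hdist v v' : ℕ):ℝ) := by
    have hterm : ∀ j ∈ range d, x (p+j) * x (p+j+d)
        = 1 - 2*(if v.getD j false = v'.getD j false then (0:ℝ) else 1) := by
      intro j hj
      simp only [Finset.mem_range] at hj
      simp only [hxdef]
      rw [hv_get j hj, hv'_get j hj]
      cases hsq : s.getD (p+j) false <;> cases hsq' : s.getD (p+j+d) false <;> norm_num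
    rw [Finset.sum_congr rfl hterm, Finset.sum_sub_distrib, Finset.sum_const, Finset.card_range,
      ← Finset.mul_sum, hdist_sum v v' (by omega : v.length = v'.length)]
    rw [hvlen]
    push_cast
    ring
  -- the deduplicated word
  set t : List Bool := u ++ v ++ w with htdef
  have hWa1 : (1:ℝ) ≤ (W:ℝ)^a := Real.one_le_rpow (by exact_mod_cast hW3.trans' (by norm_num : (1:ℕ) ≤ 3)) ha0.le
  have hWm : W < m := by
    have h1 : (W:ℝ) ≤ 48*(W:ℝ)*(W:ℝ)^a := by nlinarith
    have h2 : (W:ℝ) < m := lt_of_le_of_lt h1 hm48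
    exact_mod_cast h2
  have hdedup : AFDedup a s t := by
    refine ⟨u, v, v', w, ?_, by rw [hvlen, hv'len], ?_, hsplit, Or.inl htdef⟩
    · intro hnil
      rw [hnil] at hvlen
      simp at hvlen
      omega
    · have hdcast : (0:ℝ) < d := by exact_mod_cast hd1
      have hDa : (0:ℝ) < (d:ℝ)^a := Real.rpow_pos_of_pos hdcast a
      rw [hcorr_eq] at hcorr
      have hh : (hdist v v' : ℝ) ≤ (d:ℝ)/2 + (d:ℝ)*(((d:ℝ)^a)⁻¹) := by linarith
      rw [hvlen]
      calc (hdist v v' : ℝ) ≤ (d:ℝ)/2 + (d:ℝ)*(((d:ℝ)^a)⁻¹) := hh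
        _ = (1/2 + 1/((d:ℝ)^a)) * d := by field_simp
  have htlen : t.length = m - d := by
    rw [htdef]
    simp only [List.length_append, hulen, hvlen, hwlen]
    omega
  refine ⟨t, hdedup, by omega, by omega, ?_⟩
  have hcastt : ((t.length:ℕ):ℝ) = (m:ℝ) - d := by
    rw [htlen, Nat.cast_sub hdm]
  rw [hcastt]
  have hgoal : (1:ℝ)/1568 * (m:ℝ)^((1-a)/(1+a)) ≤ (d:ℝ) := by
    have hHle : (H:ℝ) ≤ d := by exact_mod_cast hHd
    have hHge : (W:ℝ)^(1-a)/16 ≤ H := by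
      rw [hHdef]
      exact Nat.le_ceil _
    have hWget0 : t0 - 1 ≤ W := by
      have := Nat.lt_floor_add_one t0
      rw [← hWdef] at this
      linarith
    have hW₁nn : (0:ℝ) ≤ ((W₁:ℕ):ℝ) := Nat.cast_nonneg _
    have ht02 : 2 ≤ t0 := by linarith
    have hWt02 : t0/2 ≤ (W:ℝ) := by linarith
    have h1 : (t0/2)^(1-a) ≤ (W:ℝ)^(1-a) := Real.rpow_le_rpow (by positivity) hWt02 h1a.le
    have h2 : (t0/2)^(1-a) = t0^(1-a)/(2:ℝ)^(1-a) := Real.div_rpow ht0nn (by norm_num) _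
    have h3 : (2:ℝ)^(1-a) ≤ 2 := by
      calc (2:ℝ)^(1-a) ≤ (2:ℝ)^(1:ℝ) :=
            Real.rpow_le_rpow_of_exponent_le (by norm_num) (by linarith)
        _ = 2 := Real.rpow_one 2
    have h4 : t0^(1-a)/2 ≤ t0^(1-a)/(2:ℝ)^(1-a) :=
      div_le_div_of_nonneg_left (Real.rpow_nonneg ht0nn _) (by positivity) h3
    have h5 : t0^(1-a) = ((m:ℝ)/49)^((1-a)/(1+a)) := by
      rw [ht0def, ← Real.rpow_mul (by positivity)]
      congr 1
      field_simp
    have h6 : ((m:ℝ)/49)^((1-a)/(1+a)) = (m:ℝ)^((1-a)/(1+a)) / (49:ℝ)^((1-a)/(1+a)) :=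
      Real.div_rpow (Nat.cast_nonneg m) (by norm_num) _
    have h7 : (49:ℝ)^((1-a)/(1+a)) ≤ 49 := by
      calc (49:ℝ)^((1-a)/(1+a)) ≤ (49:ℝ)^(1:ℝ) := by
            apply Real.rpow_le_rpow_of_exponent_le (by norm_num)
            rw [div_le_one h1a']
            linarith
        _ = 49 := Real.rpow_one 49
    have h8 : (m:ℝ)^((1-a)/(1+a))/49 ≤ (m:ℝ)^((1-a)/(1+a))/(49:ℝ)^((1-a)/(1+a)) :=
      div_le_div_of_nonneg_left (Real.rpow_nonneg (Nat.cast_nonneg m) _) (by positivity) h7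
    -- combine
    have hc1 : (m:ℝ)^((1-a)/(1+a))/49 ≤ t0^(1-a) := by
      rw [h5, h6]
      exact h8
    linarith
  linarith


set_option maxHeartbeats 1000000 in
theorem sublinear_bound_beta_h (a : ℝ) (ha0 : 0 < a) (ha1 : a < 1) :
    ∃ c₂ c₃ : ℝ, 0 < c₂ ∧ 0 < c₃ ∧ ∀ n : ℕ, 0 < n →
      (famax a n : ℝ) ≤ c₂ * (n : ℝ) ^ (2 * a / (1 + a)) + c₃ := by
  obtain ⟨m₀, c, hc, hstep⟩ := exists_dedup a ha0 ha1
  have h1a' : (0:ℝ) < 1 + a := by linarith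
  set δ : ℝ := 2*a/(1+a) with hδdef
  set γ : ℝ := (1-a)/(1+a) with hγdef
  have hδpos : 0 < δ := by rw [hδdef]; positivity
  have hδlt1 : δ < 1 := by rw [hδdef, div_lt_one h1a']; linarith
  have hγδ : γ + δ = 1 := by rw [hδdef, hγdef]; field_simp; ring
  set A : ℝ := 1/(δ*c) with hAdef
  have hApos : 0 < A := by rw [hAdef]; positivity
  have main : ∀ n : ℕ, ∀ s : List Bool, s.length = n → 1 ≤ n →
      ∃ j : ℕ, (j:ℝ) ≤ A * (n:ℝ)^δ + m₀ ∧ ∃ r, SqFree r ∧ AFDedupSteps a j s r := by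
    intro n
    induction n using Nat.strong_induction_on with
    | _ n ih =>
      intro s hs hn
      by_cases hcase : n ≤ m₀
      · obtain ⟨r, hr, hsteps⟩ := reduce_short a (n-1) s (by rw [hs]; omega)
        refine ⟨n-1, ?_, r, hr, hsteps⟩
        have h1 : ((n-1:ℕ):ℝ) ≤ (m₀:ℝ) := by exact_mod_cast (by omega : n - 1 ≤ m₀)
        have h2 : (0:ℝ) ≤ A*(n:ℝ)^δ := by positivity
        linarith
      · push_neg at hcase
        obtain ⟨t, hded, ht1, htlt, hquant⟩ := hstep s (by omega)
        rw [hs] at hquant htlt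
        obtain ⟨j', hj', r, hr, hsteps⟩ := ih t.length htlt t rfl ht1
        refine ⟨j'+1, ?_, r, hr, ⟨t, hded, hsteps⟩⟩
        set X : ℝ := (n:ℝ) with hXdef
        set Y : ℝ := (t.length:ℝ) with hYdef
        have hXpos : (0:ℝ) < X := by rw [hXdef]; exact_mod_cast hn
        have hYpos : (0:ℝ) < Y := by rw [hYdef]; exact_mod_cast ht1
        have hYX : Y ≤ X := by rw [hXdef, hYdef]; exact_mod_cast htlt.le
        have hXne : X ≠ 0 := ne_of_gt hXpos
        have hXd : (0:ℝ) < X^δ := Real.rpow_pos_of_pos hXpos δ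
        -- Bernoulli via weighted AM-GM
        have hgm := Real.geom_mean_le_arith_mean2_weighted hδpos.le
          (by linarith : (0:ℝ) ≤ 1-δ) (by positivity : (0:ℝ) ≤ Y/X) zero_le_one
          (by ring : δ + (1-δ) = 1)
        rw [Real.one_rpow, mul_one, mul_one] at hgm
        have hdiv : (Y/X)^δ = Y^δ/X^δ := Real.div_rpow hYpos.le hXpos.le δ
        rw [hdiv] at hgm
        set Z : ℝ := X^(δ-1) with hZdef
        have hZpos : (0:ℝ) < Z := Real.rpow_pos_of_pos hXpos _
        have hZX : Z*X = X^δ := by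
          rw [hZdef, ← Real.rpow_add_one hXne (δ-1)]
          norm_num
        have hZ1 : Z*X^γ = 1 := by
          rw [hZdef, ← Real.rpow_add hXpos]
          rw [show δ - 1 + γ = 0 by linarith]
          exact Real.rpow_zero X
        have h := mul_le_mul_of_nonneg_left hgm hXd.le
        have l1 : X^δ*(Y^δ/X^δ) = Y^δ := by field_simp
        have l2 : X^δ*(δ*(Y/X) + (1-δ)) = δ*Y*Z + (1-δ)*(Z*X) := by
          rw [← hZX]
          field_simp
        have hYd : Y^δ ≤ δ*Y*Z + (1-δ)*(Z*X) := by
          rw [l1, l2] at h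
          exact h
        have f1 : Z*(c*X^γ) ≤ Z*(X-Y) := mul_le_mul_of_nonneg_left hquant hZpos.le
        have f2 : Z*(c*X^γ) = c := by
          calc Z*(c*X^γ) = c*(Z*X^γ) := by ring
            _ = c := by rw [hZ1, mul_one]
        have f3 : c ≤ Z*X - Z*Y := by
          rw [f2] at f1
          nlinarith [f1]
        have f4 := mul_le_mul_of_nonneg_left f3 hδpos.le
        have key : δ*c ≤ X^δ - Y^δ := by
          rw [← hZX]
          nlinarith [hYd, f4]
        have hA1 : (1:ℝ) ≤ A*(X^δ - Y^δ) := by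
          have h5 : A*(δ*c) ≤ A*(X^δ - Y^δ) := mul_le_mul_of_nonneg_left key hApos.le
          have h6 : A*(δ*c) = 1 := by
            rw [hAdef]
            field_simp
          linarith
        push_cast
        nlinarith [hj', hA1, mul_pos hApos (Real.rpow_pos_of_pos hYpos δ)]
  refine ⟨A, (m₀:ℝ)+1, hApos, by positivity, ?_⟩
  intro n hn
  set k : ℕ := ⌈A*(n:ℝ)^δ⌉₊ + m₀ with hkdef
  have hmem : k ∈ {k | ∀ s : List Bool, s.length = n →
      ∃ j ≤ k, ∃ r : List Bool, SqFree r ∧ AFDedupSteps a j s r} := by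
    intro s hs
    obtain ⟨j, hj, r, hr, hsteps⟩ := main n s hs hn
    refine ⟨j, ?_, r, hr, hsteps⟩
    have h0 : A*(n:ℝ)^δ ≤ (⌈A*(n:ℝ)^δ⌉₊:ℝ) := Nat.le_ceil _
    have h1 : (j:ℝ) ≤ (⌈A*(n:ℝ)^δ⌉₊:ℝ) + (m₀:ℝ) := by linarith
    have h2 : (j:ℝ) ≤ ((⌈A*(n:ℝ)^δ⌉₊ + m₀ : ℕ):ℝ) := by push_cast; linarith
    exact_mod_cast h2
  have hfle : famax a n ≤ k := Nat.sInf_le hmem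
  have hkle : (k:ℝ) ≤ A*(n:ℝ)^δ + ((m₀:ℝ)+1) := by
    have h3 := Nat.ceil_lt_add_one (show (0:ℝ) ≤ A*(n:ℝ)^δ by positivity)
    rw [hkdef]
    push_cast
    linarith
  calc (famax a n : ℝ) ≤ (k:ℝ) := by exact_mod_cast hfle
    _ ≤ A*(n:ℝ)^δ + ((m₀:ℝ)+1) := hkle
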